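/- There exist constants k_1, k_2 and k_3 such that for t large enough: sup_{x1,x2 ∈ W} E (D_{x1} F_t^{(2)})² (D_{x2} F_t^{(2)})² ≤ k_1 t^{−2}; sup_{x ∈ W} E |D_x F_t^{(2)}|³ ≤ k_2 t^{−3/2}; and sup_{x1,x2,x3 ∈ W} E (D²_{x1,x3} F_t^{(2)})² (D²_{x2,x3} F_t^{(2)})² ≤ k_3 t^{−6}, where F_t^{(2)} = (stress(G,G_L) − E stress(G,G_L))/t^{3/2}. -/

import Mathlib

open MeasureTheory Filter Asymptotics ProbabilityTheory
open scoped ENNReal NNReal Topology Classical RealInnerProductSpace Pointwise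

noncomputable section

/-- `Euc d` is the Euclidean space `ℝ^d`. -/
abbrev Euc (d : ℕ) : Type := EuclideanSpace ℝ (Fin d)

/-- `κ_n`, the volume of the `n`-dimensional unit ball. -/
def unitBallVol (n : ℕ) : ℝ := Real.pi ^ ((n : ℝ) / 2) / Real.Gamma ((n : ℝ) / 2 + 1)

/-- The Beta function `B(a,b) = Γ(a)Γ(b)/Γ(a+b)`. -/
def betaFn (a b : ℝ) : ℝ := Real.Gamma a * Real.Gamma b / Real.Gamma (a + b)

/-- The constant `c_d = 8 π κ_{d-2}² B(3, d/2)²`. -/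
def cdConst (d : ℕ) : ℝ := 8 * Real.pi * unitBallVol (d - 2) ^ 2 * betaFn 3 ((d : ℝ) / 2) ^ 2

/-- The constant `c_d' = π κ_{d-2}³ B(3, d/2)² B(4, d/2)`. -/
def cdConst' (d : ℕ) : ℝ :=
  Real.pi * unitBallVol (d - 2) ^ 3 * betaFn 3 ((d : ℝ) / 2) ^ 2 * betaFn 4 ((d : ℝ) / 2)

variable {d : ℕ}

/-- Orthogonal projection onto the plane (submodule) `L`, viewed as a map `ℝ^d → ℝ^d`. -/
def projL (L : Submodule ℝ (Euc d)) (x : Euc d) : Euc d := (L.orthogonalProjectionOnto x : Euc d)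

/-- `λ_{d-2}((v + L^⊥) ∩ W)`, the `(d-2)`-dimensional (Hausdorff) measure of the slice of `W`
through `v` orthogonal to `L`. -/
def sliceVol (L : Submodule ℝ (Euc d)) (W : Set (Euc d)) (v : Euc d) : ℝ≥0∞ :=
  μH[(d : ℝ) - 2] ((v +ᵥ ((Lᗮ : Submodule ℝ (Euc d)) : Set (Euc d))) ∩ W)

/-- The inner parallel set `W_{-r} = {x : x + r B_d ⊆ W}`. -/
def innerParallel (W : Set (Euc d)) (r : ℝ) : Set (Euc d) :=
  {x | Metric.closedBall x r ⊆ W}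

/-- The projection of the segment `[v,w]` onto the plane `L`. -/
def segProj (L : Submodule ℝ (Euc d)) (v w : Euc d) : Set (Euc d) :=
  projL L '' segment ℝ v w

/-- The quadruple `(v1, v2, w1, w2)` gives two edges (`‖v1-v2‖ ≤ δ`, `‖w1-w2‖ ≤ δ`) whose
projections onto `L` cross inside `A`. -/
def CrossIn (L : Submodule ℝ (Euc d)) (δ : ℝ) (A : Set (Euc d))
    (q : Euc d × Euc d × Euc d × Euc d) : Prop :=
  dist q.1 q.2.1 ≤ δ ∧ dist q.2.2.1 q.2.2.2 ≤ δ ∧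
    (segProj L q.1 q.2.1 ∩ segProj L q.2.2.1 q.2.2.2 ∩ A).Nonempty

/-- All ordered quadruples of *distinct* points (distinct as occurrences) of a configuration. -/
def quadruples (m : Multiset (Euc d)) : Multiset (Euc d × Euc d × Euc d × Euc d) :=
  m.bind fun a => (m.erase a).bind fun b => ((m.erase a).erase b).bind fun c =>
    (((m.erase a).erase b).erase c).map fun e => (a, b, c, e)

/-- `ξ_t(A)`: one eighth of the number of ordered quadruples of distinct vertices forming a
crossing in `A`. -/
def crossCount (L : Submodule ℝ (Euc d)) (δ : ℝ) (A : Set (Euc d))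
    (m : Multiset (Euc d)) : ℝ :=
  ((quadruples m).filter (CrossIn L δ A)).card / 8

/-- The stress `S(a,b)` between two vertices. -/
def stressPair (L : Submodule ℝ (Euc d)) (wt : Euc d → Euc d → ℝ) (a b : Euc d) : ℝ :=
  wt a b * (dist a b - dist (projL L a) (projL L b)) ^ 2

/-- The total stress `(1/2) Σ_{(v1,v2) distinct} S(v1,v2)` of a configuration. -/
def stressM (L : Submodule ℝ (Euc d)) (wt : Euc d → Euc d → ℝ) (m : Multiset (Euc d)) : ℝ :=
  (1 / 2) * (((m ×ˢ m).map fun p => stressPair L wt p.1 p.2).sum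
    - (m.map fun a => stressPair L wt a a).sum)

/-- First order difference operator `D_x f(μ) = f(μ + δ_x) - f(μ)`. -/
def Dop (x : Euc d) (f : Multiset (Euc d) → ℝ) (m : Multiset (Euc d)) : ℝ :=
  f (x ::ₘ m) - f m

/-- Second order difference operator. -/
def Dop2 (x y : Euc d) (f : Multiset (Euc d) → ℝ) (m : Multiset (Euc d)) : ℝ :=
  f (x ::ₘ y ::ₘ m) - f (y ::ₘ m) - f (x ::ₘ m) + f m

/-- Number of points of the configuration `m` lying in `A`. -/
def countIn (A : Set (Euc d)) (m : Multiset (Euc d)) : ℕ := (m.filter (· ∈ A)).card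

/-- The Poisson distribution with mean `r` on `ℕ`. -/
def poissonNat (r : ℝ) : Measure ℕ :=
  Measure.sum fun n => ENNReal.ofReal (Real.exp (-r) * r ^ n / n.factorial) • Measure.dirac n

/-- `V` is a Poisson point process with intensity measure `μ` under `P`: for pairwise disjoint
measurable sets the counts are independent Poisson random variables. -/
def IsPoissonPP {Ω : Type} [MeasurableSpace Ω] (P : Measure Ω)
    (V : Ω → Multiset (Euc d)) (μ : Measure (Euc d)) : Prop :=
  ∀ (n : ℕ) (A : Fin n → Set (Euc d)), (∀ i, MeasurableSet (A i)) →
    Pairwise (Function.onFun Disjoint A) →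
    P.map (fun ω i => countIn (A i) (V ω)) = Measure.pi fun i => poissonNat (μ (A i)).toReal

/-- Expectation. -/
def meanP {Ω : Type} [MeasurableSpace Ω] (P : Measure Ω) (f : Ω → ℝ) : ℝ := ∫ ω, f ω ∂P

/-- Covariance. -/
def covP {Ω : Type} [MeasurableSpace Ω] (P : Measure Ω) (f g : Ω → ℝ) : ℝ :=
  ∫ ω, (f ω - meanP P f) * (g ω - meanP P g) ∂P
/-- The normalized crossing-number functional `F_t^{(1)}`, as a function of the configuration. -/
def F1m {d : ℕ} {Ω : Type} [MeasurableSpace Ω] (P : Measure Ω) (L : Submodule ℝ (Euc d))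
    (δ : ℝ → ℝ) (V : ℝ → Ω → Multiset (Euc d)) (t : ℝ) (m : Multiset (Euc d)) : ℝ :=
  (crossCount L (δ t) Set.univ m
      - meanP P fun ω' => crossCount L (δ t) Set.univ (V t ω'))
    / (t ^ ((7 : ℝ) / 2) * δ t ^ (2 * d + 2))

/-- The normalized stress functional `F_t^{(2)}`, as a function of the configuration. -/
def F2m {d : ℕ} {Ω : Type} [MeasurableSpace Ω] (P : Measure Ω) (L : Submodule ℝ (Euc d))
    (wt : Euc d → Euc d → ℝ) (V : ℝ → Ω → Multiset (Euc d)) (t : ℝ)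
    (m : Multiset (Euc d)) : ℝ :=
  (stressM L wt m - meanP P fun ω' => stressM L wt (V t ω')) / t ^ ((3 : ℝ) / 2)

/-- `F_t^{(i)}` for `i = 1, 2`. -/
def Fm {d : ℕ} {Ω : Type} [MeasurableSpace Ω] (P : Measure Ω) (L : Submodule ℝ (Euc d))
    (wt : Euc d → Euc d → ℝ) (δ : ℝ → ℝ) (V : ℝ → Ω → Multiset (Euc d))
    (i : Fin 2) (t : ℝ) (m : Multiset (Euc d)) : ℝ :=
  if i = 0 then F1m P L δ V t m else F2m P L wt V t m

/-- The random vector `F_t = (F_t^{(1)}, F_t^{(2)})`. -/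
def Fvec {d : ℕ} {Ω : Type} [MeasurableSpace Ω] (P : Measure Ω) (L : Submodule ℝ (Euc d))
    (wt : Euc d → Euc d → ℝ) (δ : ℝ → ℝ) (V : ℝ → Ω → Multiset (Euc d))
    (t : ℝ) (ω : Ω) : EuclideanSpace ℝ (Fin 2) :=
  (WithLp.equiv 2 (Fin 2 → ℝ)).symm fun i => Fm P L wt δ V i t (V t ω)

/-- The covariance matrix `Σ_t` of `F_t`. -/
def covMat {d : ℕ} {Ω : Type} [MeasurableSpace Ω] (P : Measure Ω) (L : Submodule ℝ (Euc d))
    (wt : Euc d → Euc d → ℝ) (δ : ℝ → ℝ) (V : ℝ → Ω → Multiset (Euc d))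
    (t : ℝ) : Matrix (Fin 2) (Fin 2) ℝ :=
  Matrix.of fun i j => covP P (fun ω => Fm P L wt δ V i t (V t ω))
    (fun ω => Fm P L wt δ V j t (V t ω))

/-! Adding a vertex `x` adds the stresses `S(x, v)` to all vertices `v` already present, so
`D_x F_t^{(2)} = t^{-3/2} Σ_v S(x, v)` lies in `[0, s N t^{-3/2}]` with `N` the number of vertices,
and `D²_{x,y} F_t^{(2)} = t^{-3/2} S(x, y)` is deterministic. Since `N` is Poisson with mean `t`,
the bounds follow from `E N^k ≤ 2 k^k t^k` for `t ≥ 1`, which comes from the factorial moments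
`E N(N-1)⋯(N-k+1) = t^k` and the pointwise bound `n^k ≤ k^k (n(n-1)⋯(n-k+1) + 1)`. -/

theorem Nat.pow_le_self_pow_mul_descFactorial_add_one (n k : ℕ) :
    n ^ k ≤ k ^ k * (n.descFactorial k + 1) := by
  rcases lt_or_ge n k with hnk | hkn
  · calc n ^ k ≤ k ^ k := Nat.pow_le_pow_left hnk.le k
      _ ≤ k ^ k * (n.descFactorial k + 1) := Nat.le_mul_of_pos_right _ (Nat.succ_pos _)
  · rcases Nat.eq_zero_or_pos k with rfl | hk
    · simp
    -- `k (n + 1 - k) - n = (k - 1) (n - k)`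
    have hlin : n ≤ k * (n + 1 - k) := by
      obtain ⟨j, rfl⟩ := Nat.exists_eq_add_of_le hkn
      rw [show k + j + 1 - k = j + 1 by omega]
      nlinarith
    calc n ^ k ≤ (k * (n + 1 - k)) ^ k := Nat.pow_le_pow_left hlin k
      _ = k ^ k * (n + 1 - k) ^ k := Nat.mul_pow _ _ _
      _ ≤ k ^ k * (n.descFactorial k + 1) :=
        Nat.mul_le_mul_left _ ((Nat.pow_sub_le_descFactorial n k).trans (Nat.le_succ _))

namespace ProbabilityTheory

open Nat

lemma hasSum_poissonMeasure_mul_descFactorial (r : ℝ≥0) (k : ℕ) :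
    HasSum (fun n => Real.exp (-r) * r ^ n / n ! * n.descFactorial k) ((r : ℝ) ^ k) := by
  have hvanish : ∀ n ∉ Set.range (· + k),
      Real.exp (-r) * r ^ n / n ! * (n.descFactorial k : ℝ) = 0 := fun n hn => by
    have hnk : n < k := by
      by_contra! h
      exact hn ⟨n - k, Nat.sub_add_cancel h⟩
    simp [Nat.descFactorial_eq_zero_iff_lt.mpr hnk]
  rw [← (add_left_injective k).hasSum_iff hvanish]
  have hshift (n : ℕ) : Real.exp (-r) * r ^ (n + k) / (n + k) ! * ((n + k).descFactorial k : ℝ)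
      = r ^ k * (Real.exp (-r) * r ^ n / n !) := by
    have hfac : n ! * (n + k).descFactorial k = (n + k) ! := by
      simpa using Nat.factorial_mul_descFactorial (Nat.le_add_left k n)
    have : ((n + k).descFactorial k : ℝ) ≠ 0 := by
      exact_mod_cast (Nat.descFactorial_pos.mpr (Nat.le_add_left k n)).ne'
    rw [← hfac, Nat.cast_mul, pow_add]
    field_simp
  have h := (hasSum_one_poissonMeasure r).mul_left ((r : ℝ) ^ k)
  rw [mul_one] at h
  exact h.congr_fun hshift

variable (k : ℕ)

lemma integrable_descFactorial_poissonMeasure (r : ℝ≥0) :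
    Integrable (fun n : ℕ => (n.descFactorial k : ℝ)) (poissonMeasure r) := by
  rw [integrable_poissonMeasure_iff]
  simpa using (hasSum_poissonMeasure_mul_descFactorial r k).summable

lemma integral_descFactorial_poissonMeasure (r : ℝ≥0) :
    ∫ n, (n.descFactorial k : ℝ) ∂poissonMeasure r = (r : ℝ) ^ k := by
  simpa [integral_poissonMeasure] using (hasSum_poissonMeasure_mul_descFactorial r k).tsum_eq

lemma integrable_pow_poissonMeasure (r : ℝ≥0) :
    Integrable (fun n : ℕ => (n : ℝ) ^ k) (poissonMeasure r) := by
  have hdom := ((integrable_descFactorial_poissonMeasure k r).add (integrable_const 1)).const_mul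
    ((k : ℝ) ^ k)
  refine hdom.mono' (measurable_from_nat (f := fun n : ℕ => (n : ℝ) ^ k)).aestronglyMeasurable
    (ae_of_all _ fun n => ?_)
  simp only [norm_pow, Real.norm_natCast, Pi.add_apply]
  exact_mod_cast Nat.pow_le_self_pow_mul_descFactorial_add_one n k

lemma integral_pow_poissonMeasure_le {r : ℝ≥0} (hr : 1 ≤ r) :
    ∫ n, (n : ℝ) ^ k ∂poissonMeasure r ≤ 2 * k ^ k * (r : ℝ) ^ k := by
  have hdesc := integrable_descFactorial_poissonMeasure k r
  calc ∫ n, (n : ℝ) ^ k ∂poissonMeasure r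
      ≤ ∫ n, (k : ℝ) ^ k * (n.descFactorial k + 1) ∂poissonMeasure r :=
        integral_mono (integrable_pow_poissonMeasure k r)
          ((hdesc.add (integrable_const 1)).const_mul _)
          fun n => by exact_mod_cast Nat.pow_le_self_pow_mul_descFactorial_add_one n k
    _ = k ^ k * ((r : ℝ) ^ k + 1) := by
        rw [integral_const_mul, integral_add hdesc (integrable_const 1),
          integral_descFactorial_poissonMeasure]
        simp
    _ ≤ 2 * k ^ k * (r : ℝ) ^ k := by
        have : 1 ≤ (r : ℝ) ^ k := one_le_pow₀ (NNReal.one_le_coe.mpr hr)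
        nlinarith [pow_nonneg (Nat.cast_nonneg (α := ℝ) k) k]

lemma integral_le_of_le_mul_pow_of_hasLaw_poissonMeasure {Ω : Type} [MeasurableSpace Ω]
    {P : Measure Ω} {X : Ω → ℕ} {r : ℝ≥0} (hX : HasLaw X (poissonMeasure r) P) (hr : 1 ≤ r)
    {f : Ω → ℝ} {c : ℝ} (hc : 0 ≤ c) (hf0 : ∀ ω, 0 ≤ f ω) (hf : ∀ ω, f ω ≤ c * (X ω : ℝ) ^ k) :
    ∫ ω, f ω ∂P ≤ c * (2 * k ^ k * (r : ℝ) ^ k) := by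
  have hmeas : AEStronglyMeasurable (fun n : ℕ => (n : ℝ) ^ k) (poissonMeasure r) :=
    (measurable_from_nat (f := fun n : ℕ => (n : ℝ) ^ k)).aestronglyMeasurable
  have hint : Integrable (fun ω => (X ω : ℝ) ^ k) P := by
    have := integrable_pow_poissonMeasure k r
    rw [← hX.map_eq] at this hmeas
    exact (integrable_map_measure hmeas hX.aemeasurable).mp this
  calc ∫ ω, f ω ∂P ≤ ∫ ω, c * (X ω : ℝ) ^ k ∂P :=
        integral_mono_of_nonneg (ae_of_all _ hf0) (hint.const_mul c) (ae_of_all _ hf)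
    _ = c * ∫ n, (n : ℝ) ^ k ∂poissonMeasure r := by
        rw [integral_const_mul, ← hX.integral_comp hmeas]
        rfl
    _ ≤ c * (2 * k ^ k * (r : ℝ) ^ k) :=
        mul_le_mul_of_nonneg_left (integral_pow_poissonMeasure_le k hr) hc

end ProbabilityTheory

lemma countIn_eq_card {A : Set (Euc d)} {m : Multiset (Euc d)} (hm : ∀ x ∈ m, x ∈ A) :
    countIn A m = Multiset.card m := by
  rw [countIn, Multiset.filter_eq_self.mpr hm]

namespace IsPoissonPP

variable {Ω : Type} [MeasurableSpace Ω] {P : Measure Ω} {V : Ω → Multiset (Euc d)}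

lemma hasLaw_countIn {μ : Measure (Euc d)} (hV : IsPoissonPP P V μ) {A : Set (Euc d)}
    (hA : MeasurableSet A) :
    HasLaw (fun ω => countIn A (V ω)) (poissonMeasure (μ A).toNNReal) P := by
  have hpi := hV 1 (fun _ => A) (fun _ => hA) (fun i j hij => absurd (Subsingleton.elim i j) hij)
  change P.map _ = Measure.pi fun _ => poissonMeasure (μ A).toNNReal at hpi
  have hvec : HasLaw (fun ω (_ : Fin 1) => countIn A (V ω))
      (Measure.pi fun _ => poissonMeasure (μ A).toNNReal) P := by
    refine ⟨?_, hpi⟩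
    -- otherwise the image measure would be `0`, not a probability measure
    by_contra h
    rw [Measure.map_of_not_aemeasurable h] at hpi
    simpa using congrArg (· Set.univ) hpi
  exact (measurePreserving_funUnique _ (Fin 1)).comp_hasLaw hvec

lemma hasLaw_card {W : Set (Euc d)} {t : ℝ}
    (hV : IsPoissonPP P V (ENNReal.ofReal t • volume.restrict W)) (hW : MeasurableSet W)
    (hWvol : volume W = 1) (hVW : ∀ ω, ∀ x ∈ V ω, x ∈ W) :
    HasLaw (fun ω => Multiset.card (V ω)) (poissonMeasure t.toNNReal) P := by
  have hlaw := hV.hasLaw_countIn hW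
  simp only [Measure.smul_apply, Measure.restrict_apply hW, Set.inter_self, hWvol, smul_eq_mul,
    mul_one, ENNReal.ofReal, ENNReal.toNNReal_coe] at hlaw
  simpa only [countIn_eq_card (hVW _)] using hlaw

end IsPoissonPP

section Stress

variable {L : Submodule ℝ (Euc d)} {wt : Euc d → Euc d → ℝ}

lemma stressPair_comm (hsym : ∀ a b, wt a b = wt b a) (a b : Euc d) :
    stressPair L wt a b = stressPair L wt b a := by
  rw [stressPair, stressPair, hsym, dist_comm a, dist_comm (projL L a)]

lemma stressPair_nonneg (hnn : ∀ a b, 0 ≤ wt a b) (a b : Euc d) : 0 ≤ stressPair L wt a b :=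
  mul_nonneg (hnn a b) (sq_nonneg _)

lemma stressM_cons (hsym : ∀ a b, wt a b = wt b a) (x : Euc d) (m : Multiset (Euc d)) :
    stressM L wt (x ::ₘ m) = stressM L wt m + (m.map (stressPair L wt x)).sum := by
  have hswap : (m.map fun a => stressPair L wt a x) = m.map (stressPair L wt x) :=
    Multiset.map_congr rfl fun a _ => stressPair_comm hsym a x
  simp only [stressM, Multiset.cons_product, Multiset.product_cons, Multiset.map_add,
    Multiset.sum_add, Multiset.map_map, Multiset.map_cons, Multiset.sum_cons, Function.comp_def,
    hswap]
  ring

variable {W : Set (Euc d)} {s : ℝ} {Ω : Type} [MeasurableSpace Ω] {P : Measure Ω}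
  {V : ℝ → Ω → Multiset (Euc d)} {t : ℝ}

lemma Dop_F2m (hsym : ∀ a b, wt a b = wt b a) (x : Euc d) (m : Multiset (Euc d)) :
    Dop x (F2m P L wt V t) m = (m.map (stressPair L wt x)).sum / t ^ ((3 : ℝ) / 2) := by
  rw [Dop, F2m, F2m, stressM_cons hsym]
  ring

lemma Dop2_F2m (hsym : ∀ a b, wt a b = wt b a) (x y : Euc d) (m : Multiset (Euc d)) :
    Dop2 x y (F2m P L wt V t) m = stressPair L wt x y / t ^ ((3 : ℝ) / 2) := by
  simp only [Dop2, F2m, stressM_cons hsym, Multiset.map_cons, Multiset.sum_cons]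
  ring

lemma abs_Dop_F2m_le (hsym : ∀ a b, wt a b = wt b a) (hnn : ∀ a b, 0 ≤ wt a b)
    (hS : ∀ v1 ∈ W, ∀ v2 ∈ W, stressPair L wt v1 v2 ≤ s) {x : Euc d} (hx : x ∈ W)
    {m : Multiset (Euc d)} (hm : ∀ y ∈ m, y ∈ W) (ht : 0 < t) :
    |Dop x (F2m P L wt V t) m| ≤ s * Multiset.card m * t ^ (-(3 / 2 : ℝ)) := by
  have hsum_nonneg : 0 ≤ (m.map (stressPair L wt x)).sum :=
    Multiset.sum_nonneg fun _ hz => by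
      obtain ⟨y, -, rfl⟩ := Multiset.mem_map.mp hz
      exact stressPair_nonneg hnn x y
  have hsum_le : (m.map (stressPair L wt x)).sum ≤ s * Multiset.card m := by
    calc (m.map (stressPair L wt x)).sum ≤ Multiset.card (m.map (stressPair L wt x)) • s :=
          Multiset.sum_le_card_nsmul _ _ fun _ hz => by
            obtain ⟨y, hy, rfl⟩ := Multiset.mem_map.mp hz
            exact hS x hx y (hm y hy)
      _ = s * Multiset.card m := by rw [Multiset.card_map, nsmul_eq_mul, mul_comm]
  rw [Dop_F2m hsym, abs_of_nonneg (by positivity), Real.rpow_neg ht.le, ← div_eq_mul_inv]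
  gcongr

lemma abs_Dop2_F2m_le (hsym : ∀ a b, wt a b = wt b a) (hnn : ∀ a b, 0 ≤ wt a b)
    (hS : ∀ v1 ∈ W, ∀ v2 ∈ W, stressPair L wt v1 v2 ≤ s) {x y : Euc d} (hx : x ∈ W)
    (hy : y ∈ W) (m : Multiset (Euc d)) (ht : 0 < t) :
    |Dop2 x y (F2m P L wt V t) m| ≤ s * t ^ (-(3 / 2 : ℝ)) := by
  rw [Dop2_F2m hsym, abs_of_nonneg (div_nonneg (stressPair_nonneg hnn x y) (by positivity)),
    Real.rpow_neg ht.le, ← div_eq_mul_inv]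
  gcongr
  exact hS x hx y hy

lemma integral_sq_Dop_F2m_mul_sq_Dop_F2m_le (hsym : ∀ a b, wt a b = wt b a)
    (hnn : ∀ a b, 0 ≤ wt a b) (hS : ∀ v1 ∈ W, ∀ v2 ∈ W, stressPair L wt v1 v2 ≤ s)
    (hVW : ∀ ω, ∀ x ∈ V t ω, x ∈ W)
    (hN : HasLaw (fun ω => Multiset.card (V t ω)) (poissonMeasure t.toNNReal) P) (ht : 1 ≤ t)
    {x1 x2 : Euc d} (hx1 : x1 ∈ W) (hx2 : x2 ∈ W) :
    ∫ ω, Dop x1 (F2m P L wt V t) (V t ω) ^ 2 * Dop x2 (F2m P L wt V t) (V t ω) ^ 2 ∂P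
      ≤ 512 * s ^ 4 * t ^ (-(2 : ℝ)) := by
  have ht0 : 0 < t := one_pos.trans_le ht
  have hD {x : Euc d} (hx : x ∈ W) (ω : Ω) : Dop x (F2m P L wt V t) (V t ω) ^ 2
      ≤ (s * Multiset.card (V t ω) * t ^ (-(3 / 2 : ℝ))) ^ 2 :=
    sq_le_sq' (abs_le.mp (abs_Dop_F2m_le hsym hnn hS hx (hVW ω) ht0)).1
      (abs_le.mp (abs_Dop_F2m_le hsym hnn hS hx (hVW ω) ht0)).2
  calc _ ≤ s ^ 4 * (t ^ (-(3 / 2 : ℝ))) ^ 4 * (2 * 4 ^ 4 * (t.toNNReal : ℝ) ^ 4) :=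
        integral_le_of_le_mul_pow_of_hasLaw_poissonMeasure 4 hN (by simpa using ht)
          (by positivity) (fun ω => by positivity) fun ω =>
            (mul_le_mul (hD hx1 ω) (hD hx2 ω) (sq_nonneg _) (sq_nonneg _)).trans_eq (by ring)
    _ = 512 * s ^ 4 * ((t ^ (-(3 / 2 : ℝ))) ^ 4 * t ^ 4) := by
        rw [Real.coe_toNNReal _ ht0.le]; ring
    _ = 512 * s ^ 4 * t ^ (-(2 : ℝ)) := by
        rw [← Real.rpow_mul_natCast ht0.le, ← Real.rpow_natCast t 4, ← Real.rpow_add ht0]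
        norm_num

lemma integral_abs_Dop_F2m_pow_three_le (hsym : ∀ a b, wt a b = wt b a)
    (hnn : ∀ a b, 0 ≤ wt a b) (hS : ∀ v1 ∈ W, ∀ v2 ∈ W, stressPair L wt v1 v2 ≤ s)
    (hVW : ∀ ω, ∀ x ∈ V t ω, x ∈ W)
    (hN : HasLaw (fun ω => Multiset.card (V t ω)) (poissonMeasure t.toNNReal) P) (ht : 1 ≤ t)
    {x : Euc d} (hx : x ∈ W) :
    ∫ ω, |Dop x (F2m P L wt V t) (V t ω)| ^ 3 ∂P ≤ 54 * s ^ 3 * t ^ (-(3 : ℝ) / 2) := by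
  have ht0 : 0 < t := one_pos.trans_le ht
  have hs : 0 ≤ s := (stressPair_nonneg hnn x x).trans (hS x hx x hx)
  have hD (ω : Ω) : |Dop x (F2m P L wt V t) (V t ω)|
      ≤ s * Multiset.card (V t ω) * t ^ (-(3 / 2 : ℝ)) :=
    abs_Dop_F2m_le hsym hnn hS hx (hVW ω) ht0
  calc _ ≤ s ^ 3 * (t ^ (-(3 / 2 : ℝ))) ^ 3 * (2 * 3 ^ 3 * (t.toNNReal : ℝ) ^ 3) :=
        integral_le_of_le_mul_pow_of_hasLaw_poissonMeasure 3 hN (by simpa using ht)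
          (by positivity) (fun ω => by positivity) fun ω =>
            (pow_le_pow_left₀ (abs_nonneg _) (hD ω) 3).trans_eq (by ring)
    _ = 54 * s ^ 3 * ((t ^ (-(3 / 2 : ℝ))) ^ 3 * t ^ 3) := by
        rw [Real.coe_toNNReal _ ht0.le]; ring
    _ = 54 * s ^ 3 * t ^ (-(3 : ℝ) / 2) := by
        rw [← Real.rpow_mul_natCast ht0.le, ← Real.rpow_natCast t 3, ← Real.rpow_add ht0]
        norm_num

lemma integral_sq_Dop2_F2m_mul_sq_Dop2_F2m_le [IsProbabilityMeasure P]
    (hsym : ∀ a b, wt a b = wt b a) (hnn : ∀ a b, 0 ≤ wt a b)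
    (hS : ∀ v1 ∈ W, ∀ v2 ∈ W, stressPair L wt v1 v2 ≤ s) (ht : 0 < t)
    {x1 x2 x3 : Euc d} (hx1 : x1 ∈ W) (hx2 : x2 ∈ W) (hx3 : x3 ∈ W) :
    ∫ ω, Dop2 x1 x3 (F2m P L wt V t) (V t ω) ^ 2 * Dop2 x2 x3 (F2m P L wt V t) (V t ω) ^ 2 ∂P
      ≤ s ^ 4 * t ^ (-(6 : ℝ)) := by
  have hD {x : Euc d} (hx : x ∈ W) (ω : Ω) :
      Dop2 x x3 (F2m P L wt V t) (V t ω) ^ 2 ≤ (s * t ^ (-(3 / 2 : ℝ))) ^ 2 :=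
    sq_le_sq' (abs_le.mp (abs_Dop2_F2m_le hsym hnn hS hx hx3 (V t ω) ht)).1
      (abs_le.mp (abs_Dop2_F2m_le hsym hnn hS hx hx3 (V t ω) ht)).2
  calc _ ≤ ∫ _, s ^ 4 * (t ^ (-(3 / 2 : ℝ))) ^ 4 ∂P :=
        integral_mono_of_nonneg (ae_of_all _ fun ω => by positivity) (integrable_const _)
          (ae_of_all _ fun ω =>
            (mul_le_mul (hD hx1 ω) (hD hx2 ω) (sq_nonneg _) (sq_nonneg _)).trans_eq (by ring))
    _ = s ^ 4 * t ^ (-(6 : ℝ)) := by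
        rw [integral_const, probReal_univ, one_smul, ← Real.rpow_mul_natCast ht.le]
        norm_num

end Stress

theorem stress_difference_operator_bounds_general
    (d : ℕ)
    (Ω : Type) [MeasurableSpace Ω] (P : Measure Ω) [IsProbabilityMeasure P]
    (W : Set (Euc d)) (hWcomp : IsCompact W) (hWvol : volume W = 1)
    (L : Submodule ℝ (Euc d))
    (V : ℝ → Ω → Multiset (Euc d)) (hVW : ∀ t ω, ∀ x ∈ V t ω, x ∈ W)
    (hPoisson : ∀ t > 0, IsPoissonPP P (V t) (ENNReal.ofReal t • volume.restrict W))
    (wt : Euc d → Euc d → ℝ) (hwtsym : ∀ a b, wt a b = wt b a)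
    (hwtnn : ∀ a b, 0 ≤ wt a b)
    (s : ℝ) (hSbound : ∀ v1 ∈ W, ∀ v2 ∈ W, stressPair L wt v1 v2 ≤ s)
    :
    ∃ (k1 k2 k3 t0 : ℝ), ∀ t ≥ t0,
      (∀ x1 ∈ W, ∀ x2 ∈ W,
        (∫ ω, Dop x1 (F2m P L wt V t) (V t ω) ^ 2 *
            Dop x2 (F2m P L wt V t) (V t ω) ^ 2 ∂P) ≤ k1 * t ^ (-(2 : ℝ))) ∧
      (∀ x ∈ W,
        (∫ ω, |Dop x (F2m P L wt V t) (V t ω)| ^ 3 ∂P) ≤ k2 * t ^ (-(3 : ℝ) / 2)) ∧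
      (∀ x1 ∈ W, ∀ x2 ∈ W, ∀ x3 ∈ W,
        (∫ ω, Dop2 x1 x3 (F2m P L wt V t) (V t ω) ^ 2 *
            Dop2 x2 x3 (F2m P L wt V t) (V t ω) ^ 2 ∂P) ≤ k3 * t ^ (-(6 : ℝ))) := by
  refine ⟨512 * s ^ 4, 54 * s ^ 3, s ^ 4, 1, fun t ht => ?_⟩
  have ht0 : 0 < t := one_pos.trans_le ht
  have hN := (hPoisson t ht0).hasLaw_card hWcomp.measurableSet hWvol (hVW t)
  exact ⟨fun x1 hx1 x2 hx2 =>
      integral_sq_Dop_F2m_mul_sq_Dop_F2m_le hwtsym hwtnn hSbound (hVW t) hN ht hx1 hx2,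
    fun x hx => integral_abs_Dop_F2m_pow_three_le hwtsym hwtnn hSbound (hVW t) hN ht hx,
    fun x1 hx1 x2 hx2 x3 hx3 =>
      integral_sq_Dop2_F2m_mul_sq_Dop2_F2m_le hwtsym hwtnn hSbound ht0 hx1 hx2 hx3⟩

/-- **Lemma (Bounds for stress).** Moment bounds for the first and second order difference
operators of the normalized stress functional `F_t^{(2)}`, for `t` large enough. -/
theorem stress_difference_operator_bounds
    (d : ℕ) (hd : 3 ≤ d)
    (Ω : Type) [MeasurableSpace Ω] (P : Measure Ω) [IsProbabilityMeasure P]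
    (W : Set (Euc d)) (hWcomp : IsCompact W) (hWconv : Convex ℝ W)
    (hWint : (interior W).Nonempty) (hWvol : volume W = 1)
    (L : Submodule ℝ (Euc d)) (hL : Module.finrank ℝ L = 2)
    (δ : ℝ → ℝ) (hδpos : ∀ t > 0, 0 < δ t) (hδ0 : Tendsto δ atTop (𝓝 0))
    (V : ℝ → Ω → Multiset (Euc d)) (hVW : ∀ t ω, ∀ x ∈ V t ω, x ∈ W)
    (hPoisson : ∀ t > 0, IsPoissonPP P (V t) (ENNReal.ofReal t • volume.restrict W))
    (wt : Euc d → Euc d → ℝ) (hwtsym : ∀ a b, wt a b = wt b a)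
    (hwtnn : ∀ a b, 0 ≤ wt a b)
    (s : ℝ) (hs : 0 < s) (hSbound : ∀ v1 ∈ W, ∀ v2 ∈ W, stressPair L wt v1 v2 ≤ s)
    :
    ∃ (k1 k2 k3 t0 : ℝ), ∀ t ≥ t0,
      (∀ x1 ∈ W, ∀ x2 ∈ W,
        (∫ ω, Dop x1 (F2m P L wt V t) (V t ω) ^ 2 *
            Dop x2 (F2m P L wt V t) (V t ω) ^ 2 ∂P) ≤ k1 * t ^ (-(2 : ℝ))) ∧
      (∀ x ∈ W,
        (∫ ω, |Dop x (F2m P L wt V t) (V t ω)| ^ 3 ∂P) ≤ k2 * t ^ (-(3 : ℝ) / 2)) ∧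
      (∀ x1 ∈ W, ∀ x2 ∈ W, ∀ x3 ∈ W,
        (∫ ω, Dop2 x1 x3 (F2m P L wt V t) (V t ω) ^ 2 *
            Dop2 x2 x3 (F2m P L wt V t) (V t ω) ^ 2 ∂P) ≤ k3 * t ^ (-(6 : ℝ))) :=
  stress_difference_operator_bounds_general d Ω P W hWcomp hWvol L V hVW hPoisson wt hwtsym hwtnn s
    hSbound
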